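/- For every P > 0, setting x = 2P²/(1 + 4P + 2P²), one has (1/(2π))·∫₀^{2π} log₂((1+2P)² − 2P²·(1 + cos θ)) dθ = log₂(1 + 4P + 2P²) + log₂(1 + √(1 − x²)) − 1. -/

import Mathlib

/-!
Writing `x = 2r / (1 + r²)` with `r = x / (1 + √(1 - x²))`, one has
`1 - x cos θ = |e^{iθ} - r|² / (1 + r²)`, and `log |e^{iθ} - r|` has mean zero over the unit
circle since `|r| < 1` (Jensen). Hence the mean of `log (1 - x cos θ)` is
`-log (1 + r²) = log ((1 + √(1 - x²)) / 2)`, and the theorem follows from the factorisation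
`(1 + 2P)² - 2P²(1 + cos θ) = (1 + 4P + 2P²)(1 - x cos θ)`.
-/

open MeasureTheory Real

lemma norm_circleMap_zero_one_sub_ofReal_sq (r θ : ℝ) :
    ‖circleMap 0 1 θ - r‖ ^ 2 = 1 - 2 * r * cos θ + r ^ 2 := by
  rw [Complex.sq_norm, Complex.normSq_apply]
  simp only [circleMap_zero, Complex.ofReal_one, one_mul, Complex.sub_re, Complex.sub_im,
    Complex.exp_ofReal_mul_I_re, Complex.exp_ofReal_mul_I_im, Complex.ofReal_re,
    Complex.ofReal_im]
  nlinarith [sin_sq_add_cos_sq θ]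

theorem integral_log_one_sub_two_mul_cos_add_sq (r : ℝ) :
    ∫ θ in 0..2 * π, log (1 - 2 * r * cos θ + r ^ 2) = 4 * π * log⁺ |r| := by
  have hmean := (circleAverage_log_norm_sub_const_eq_posLog (a := (r : ℂ))).symm
  rw [circleAverage_def, Complex.norm_real, norm_eq_abs, smul_eq_mul,
    eq_inv_mul_iff_mul_eq₀ (by positivity)] at hmean
  calc ∫ θ in 0..2 * π, log (1 - 2 * r * cos θ + r ^ 2)
      = ∫ θ in 0..2 * π, 2 * log ‖circleMap 0 1 θ - r‖ := by
        simp only [← norm_circleMap_zero_one_sub_ofReal_sq, log_pow, Nat.cast_ofNat]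
    _ = 4 * π * log⁺ |r| := by
        rw [intervalIntegral.integral_const_mul, ← hmean]
        ring

lemma one_sub_mul_cos_pos {x : ℝ} (hx : |x| < 1) (θ : ℝ) : 0 < 1 - x * cos θ := by
  have h : |x * cos θ| < 1 := by
    rw [abs_mul]
    exact (mul_le_of_le_one_right (abs_nonneg x) (abs_cos_le_one θ)).trans_lt hx
  linarith [le_abs_self (x * cos θ)]

lemma intervalIntegrable_log_one_sub_mul_cos {x : ℝ} (hx : |x| < 1) (a b : ℝ) :
    IntervalIntegrable (fun θ ↦ log (1 - x * cos θ)) volume a b :=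
  (Continuous.log (by fun_prop) fun θ ↦ (one_sub_mul_cos_pos hx θ).ne').intervalIntegrable a b

theorem integral_log_one_sub_mul_cos {x : ℝ} (hx : |x| < 1) :
    ∫ θ in 0..2 * π, log (1 - x * cos θ) = 2 * π * log ((1 + √(1 - x ^ 2)) / 2) := by
  set s := √(1 - x ^ 2)
  have hx2 : x ^ 2 < 1 := (sq_lt_one_iff_abs_lt_one x).mpr hx
  have hs : s ^ 2 = 1 - x ^ 2 := sq_sqrt (by linarith)
  have hs0 : 0 ≤ s := sqrt_nonneg _
  set r := x / (1 + s)
  have hr : |r| < 1 := by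
    rw [abs_div, abs_of_pos (by positivity : (0 : ℝ) < 1 + s), div_lt_one (by positivity)]
    linarith
  have hr2 : 1 + r ^ 2 = 2 / (1 + s) := by
    simp only [r]
    field_simp
    nlinarith
  have hfactor : ∀ θ, 1 - 2 * r * cos θ + r ^ 2 = (1 + r ^ 2) * (1 - x * cos θ) := fun θ ↦ by
    rw [hr2]
    simp only [r]
    field_simp
    linear_combination hs
  have hlog : ∀ θ, log (1 - 2 * r * cos θ + r ^ 2) = log (1 + r ^ 2) + log (1 - x * cos θ) :=
    fun θ ↦ by rw [hfactor, log_mul (by positivity) (one_sub_mul_cos_pos hx θ).ne']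
  have key := integral_log_one_sub_two_mul_cos_add_sq r
  rw [(posLog_eq_zero_iff _).mpr (by rw [abs_abs]; exact hr.le), mul_zero, funext hlog,
    intervalIntegral.integral_add intervalIntegrable_const
      (intervalIntegrable_log_one_sub_mul_cos hx _ _), intervalIntegral.integral_const,
    smul_eq_mul, sub_zero, hr2] at key
  rw [← inv_div, log_inv]
  linarith

/-- Closed form of the ergodic MIMO cut-set bound for the `2`-user `2`-hop network
with `2` relays under i.i.d. uniform phase fading. -/
theorem mimo_closed_form_uniform_phase (P : ℝ) (hP : 0 < P) :
    (1 / (2 * π)) *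
        (∫ θ in (0:ℝ)..(2 * π),
          Real.logb 2 ((1 + 2 * P) ^ 2 - 2 * P ^ 2 * (1 + Real.cos θ))) =
      Real.logb 2 (1 + 4 * P + 2 * P ^ 2) +
        Real.logb 2 (1 + Real.sqrt (1 - (2 * P ^ 2 / (1 + 4 * P + 2 * P ^ 2)) ^ 2)) - 1 := by
  set S := 1 + 4 * P + 2 * P ^ 2
  set x := 2 * P ^ 2 / S
  have hS : 0 < S := by positivity
  have hx : |x| < 1 := by
    rw [abs_of_nonneg (by positivity), div_lt_one hS]
    nlinarith
  have hfactor : ∀ θ, (1 + 2 * P) ^ 2 - 2 * P ^ 2 * (1 + cos θ) = S * (1 - x * cos θ) :=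
    fun θ ↦ by
      simp only [x]
      field_simp
      ring
  simp_rw [hfactor, logb, log_mul hS.ne' (one_sub_mul_cos_pos hx _).ne']
  rw [intervalIntegral.integral_div, intervalIntegral.integral_add intervalIntegrable_const
    (intervalIntegrable_log_one_sub_mul_cos hx _ _), intervalIntegral.integral_const,
    integral_log_one_sub_mul_cos hx, smul_eq_mul, sub_zero,
    log_div (by positivity) two_ne_zero]
  field_simp
  ring
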